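/- Let a₁,…,a_{n₁} be distinct complex numbers in the open upper half-plane, b₁,…,b_{n₂} distinct complex numbers in the open lower half-plane, and α₁,…,α_{n₁}, β₁,…,β_{n₂} ∈ ℂ, and define K(x) = (1/(2πi))[ Σ_{j=1}^{n₁} α_j/(x−a_j) − Σ_{j=1}^{n₂} β_j/(x−b_j) ] for x ∈ ℝ. If Σ_{j=1}^{n₁} α_j a_j^k = Σ_{j=1}^{n₂} β_j b_j^k for k = 0, 1, …, m−1, and moreover Σ_{j=1}^{n₁} α_j = 1, while Σ_{j=1}^{n₁} α_j a_j^k = 0 for k = 1, …, m−1, then K is an mth order kernel: ∫_ℝ K(x)dx = 1, for each 0 < j < m the function x ↦ K(x)x^j is integrable with ∫_ℝ K(x)x^j dx = 0, and there is a constant C_K > 0 with |K(x)| ≤ C_K/(1+|x|)^{m+1} for all x ∈ ℝ. -/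

import Mathlib

/-!
Multiplying the partial fraction `Σ γ_l / (x - c_l)` by `x^j` gives `Σ γ_l c_l^j / (x - c_l)` plus a
polynomial whose coefficients are the moments `Σ γ_l c_l^k`, `k < j`; so under the moment
identities `K(x) x^j` is again a rational kernel, with residues `α_l a_l^j` and `β_l b_l^j`.
A rational kernel whose residue sums agree is integrable, with integral `Σ α_l`: subtract
`(x - i)⁻¹` from every pole term. For `c` in the upper half-plane, `(x - c)⁻¹ - (x - i)⁻¹` is the
derivative of `log ((x - c) / (x - i))`, which tends to `0` at both ends, so its integral vanishes;
for `c` in the lower half-plane one compares with `(x + i)⁻¹` instead and picks up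
`∫ (x - i)⁻¹ - (x + i)⁻¹ = ∫ 2i / (1 + x²) = 2πi`. Finally every rational kernel is
`O(1 / (1 + |x|))`, and applying this to both `K` and `K x^m` gives the decay of order `m + 1`.
-/

open MeasureTheory Real Set

/-- The rational kernel with poles `a j` in the upper half-plane and `b j` in the
lower half-plane, and residues `α j`, `β j`. -/
noncomputable def ratKernel {n₁ n₂ : ℕ} (a : Fin n₁ → ℂ) (b : Fin n₂ → ℂ)
    (α : Fin n₁ → ℂ) (β : Fin n₂ → ℂ) (x : ℝ) : ℂ :=
  (1 / (2 * Real.pi * Complex.I)) *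
    (∑ j, α j / ((x : ℂ) - a j) - ∑ j, β j / ((x : ℂ) - b j))

open Filter Topology Bornology

lemma pow_div_sub_eq {K : Type*} [Field K] {z c : K} (hz : z - c ≠ 0) (j : ℕ) :
    z ^ j / (z - c) = c ^ j / (z - c) + ∑ i ∈ Finset.range j, z ^ i * c ^ (j - 1 - i) := by
  field_simp
  linear_combination -geom_sum₂_mul z c j

lemma sum_div_sub_mul_pow {K : Type*} [Field K] {n : ℕ} (c γ : Fin n → K) {z : K}
    (hz : ∀ l, z - c l ≠ 0) (j : ℕ) :
    (∑ l, γ l / (z - c l)) * z ^ j = ∑ l, γ l * c l ^ j / (z - c l)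
      + ∑ i ∈ Finset.range j, z ^ i * ∑ l, γ l * c l ^ (j - 1 - i) := by
  have hterm (l : Fin n) : γ l / (z - c l) * z ^ j = γ l * c l ^ j / (z - c l)
      + ∑ i ∈ Finset.range j, z ^ i * (γ l * c l ^ (j - 1 - i)) := by
    rw [div_mul_eq_mul_div, mul_div_assoc, pow_div_sub_eq (hz l), mul_add, mul_div_assoc,
      Finset.mul_sum]
    congr 1
    exact Finset.sum_congr rfl fun i _ => by ring
  simp_rw [Finset.sum_mul, hterm, Finset.sum_add_distrib, Finset.mul_sum]
  rw [Finset.sum_comm]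

section InverseOfRealSub

variable {c d : ℂ}

lemma ofReal_sub_ne_zero (x : ℝ) (hc : c.im ≠ 0) : (x : ℂ) - c ≠ 0 :=
  fun h => hc (by simpa using (congrArg Complex.im h).symm)

lemma exists_norm_inv_ofReal_sub_le (hc : c.im ≠ 0) :
    ∃ C > 0, ∀ x : ℝ, ‖((x : ℂ) - c)⁻¹‖ ≤ C / (1 + |x|) := by
  have him : 0 < |c.im| := abs_pos.2 hc
  refine ⟨(1 + ‖c‖) / |c.im| + 1, by positivity, fun x => ?_⟩
  have hpos : 0 < ‖(x : ℂ) - c‖ := norm_pos_iff.2 (ofReal_sub_ne_zero x hc)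
  have him_le : |c.im| ≤ ‖(x : ℂ) - c‖ := by
    simpa using Complex.abs_im_le_norm ((x : ℂ) - c)
  -- `1 + |x| ≤ (1 + ‖c‖) + ‖x - c‖`, and `‖x - c‖ ≥ |c.im|` absorbs the constant.
  have habs : |x| ≤ ‖c‖ + ‖(x : ℂ) - c‖ := by
    simpa [add_comm] using norm_le_norm_add_norm_sub' (x : ℂ) c
  have hconst : 1 + ‖c‖ ≤ (1 + ‖c‖) / |c.im| * ‖(x : ℂ) - c‖ := by
    rw [div_mul_eq_mul_div, le_div_iff₀ him]
    exact mul_le_mul_of_nonneg_left him_le (by positivity)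
  rw [norm_inv, inv_le_iff_one_le_mul₀ hpos, div_mul_eq_mul_div, one_le_div (by positivity)]
  nlinarith

lemma tendsto_inv_ofReal_sub_nhds_zero {l : Filter ℝ}
    (hl : Tendsto (fun x : ℝ => (x : ℂ)) l (cobounded ℂ)) (c : ℂ) :
    Tendsto (fun x : ℝ => ((x : ℂ) - c)⁻¹) l (𝓝 0) :=
  tendsto_inv₀_cobounded.comp ((tendsto_sub_const_cobounded c).comp hl)

lemma integrable_inv_ofReal_sub_sub_inv_ofReal_sub (hc : c.im ≠ 0) (hd : d.im ≠ 0) :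
    Integrable (fun x : ℝ => ((x : ℂ) - c)⁻¹ - ((x : ℂ) - d)⁻¹) := by
  obtain ⟨C, hC, hCle⟩ := exists_norm_inv_ofReal_sub_le hc
  obtain ⟨D, hD, hDle⟩ := exists_norm_inv_ofReal_sub_le hd
  have hcont : Continuous (fun x : ℝ => ((x : ℂ) - c)⁻¹ - ((x : ℂ) - d)⁻¹) := by
    refine Continuous.sub ?_ ?_
    · exact (by fun_prop : Continuous fun x : ℝ => (x : ℂ) - c).inv₀ (ofReal_sub_ne_zero · hc)
    · exact (by fun_prop : Continuous fun x : ℝ => (x : ℂ) - d).inv₀ (ofReal_sub_ne_zero · hd)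
  refine (integrable_inv_one_add_sq.const_mul (‖c - d‖ * (C * D))).mono'
    hcont.aestronglyMeasurable (Eventually.of_forall fun x => ?_)
  have hxc := ofReal_sub_ne_zero x hc
  have hxd := ofReal_sub_ne_zero x hd
  have hx : 0 < 1 + |x| := by positivity
  have hsq : 1 + x ^ 2 ≤ (1 + |x|) ^ 2 := by nlinarith [abs_nonneg x, sq_abs x]
  calc ‖((x : ℂ) - c)⁻¹ - ((x : ℂ) - d)⁻¹‖
      = ‖c - d‖ * (‖((x : ℂ) - c)⁻¹‖ * ‖((x : ℂ) - d)⁻¹‖) := by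
        rw [inv_sub_inv hxc hxd, div_eq_mul_inv, mul_inv, norm_mul, norm_mul]
        congr 2
        ring
    _ ≤ ‖c - d‖ * (C / (1 + |x|) * (D / (1 + |x|))) := by
        gcongr
        exacts [hCle x, hDle x]
    _ = ‖c - d‖ * (C * D) * ((1 + |x|) ^ 2)⁻¹ := by field_simp
    _ ≤ ‖c - d‖ * (C * D) * (1 + x ^ 2)⁻¹ := by gcongr

end InverseOfRealSub

section IntegralInverseOfRealSub

variable {c d : ℂ}

lemma ofReal_sub_div_ofReal_sub_mem_slitPlane (x : ℝ) (hcd : 0 < c.im * d.im) :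
    ((x : ℂ) - c) / ((x : ℂ) - d) ∈ Complex.slitPlane := by
  have hd : d.im ≠ 0 := fun h => by simp [h] at hcd
  set u := ((x : ℂ) - c) / ((x : ℂ) - d)
  rw [Complex.mem_slitPlane_iff, or_iff_not_imp_right, not_not]
  intro him
  -- A real `u` with `u (x - d) = x - c` must equal `c.im / d.im > 0`.
  have hre : u.re * d.im = c.im := by
    have hu : u * ((x : ℂ) - d) = (x : ℂ) - c := div_mul_cancel₀ _ (ofReal_sub_ne_zero x hd)
    have := congrArg Complex.im hu
    simp only [Complex.mul_im, Complex.sub_im, Complex.ofReal_im, him] at this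
    linarith
  have : 0 < u.re * (d.im * d.im) := by rwa [← mul_assoc, hre]
  nlinarith [mul_self_nonneg d.im]

lemma integral_inv_ofReal_sub_sub_inv_ofReal_sub_eq_zero (hcd : 0 < c.im * d.im) :
    ∫ x : ℝ, ((x : ℂ) - c)⁻¹ - ((x : ℂ) - d)⁻¹ = 0 := by
  have hc : c.im ≠ 0 := fun h => by simp [h] at hcd
  have hd : d.im ≠ 0 := fun h => by simp [h] at hcd
  set u : ℝ → ℂ := fun x => ((x : ℂ) - c) / ((x : ℂ) - d)
  have hderiv (x : ℝ) :
      HasDerivAt (fun y => Complex.log (u y)) (((x : ℂ) - c)⁻¹ - ((x : ℂ) - d)⁻¹) x := by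
    have hxc := ofReal_sub_ne_zero x hc
    have hxd := ofReal_sub_ne_zero x hd
    have hsub (p : ℂ) : HasDerivAt (fun y : ℝ => (y : ℂ) - p) 1 x := by
      simpa using (Complex.ofRealCLM.hasDerivAt (x := x)).sub_const p
    refine (((hsub c).div (hsub d) hxd).clog_real
      (ofReal_sub_div_ofReal_sub_mem_slitPlane x hcd)).congr_deriv ?_
    simp only [Pi.div_apply]
    field_simp
  have hlim {l : Filter ℝ} (hl : Tendsto (fun x : ℝ => (x : ℂ)) l (cobounded ℂ)) :
      Tendsto (fun x => Complex.log (u x)) l (𝓝 0) := by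
    have hu : Tendsto u l (𝓝 1) := by
      have := ((tendsto_inv_ofReal_sub_nhds_zero hl d).const_mul (d - c)).const_add 1
      refine Tendsto.congr (fun x => ?_) (by simpa using this)
      simp only [u]
      field_simp [ofReal_sub_ne_zero x hd]
      ring
    have := (continuousAt_clog (by simp [Complex.mem_slitPlane_iff])).tendsto.comp hu
    rwa [Complex.log_one] at this
  simpa using integral_of_hasDerivAt_of_tendsto hderiv
    (integrable_inv_ofReal_sub_sub_inv_ofReal_sub hc hd)
    (hlim (RCLike.tendsto_ofReal_atBot_cobounded ℂ))
    (hlim (RCLike.tendsto_ofReal_atTop_cobounded ℂ))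

lemma integral_inv_ofReal_sub_I_sub_inv_ofReal_add_I :
    ∫ x : ℝ, ((x : ℂ) - Complex.I)⁻¹ - ((x : ℂ) + Complex.I)⁻¹ = 2 * π * Complex.I := by
  have heq (x : ℝ) : ((x : ℂ) - Complex.I)⁻¹ - ((x : ℂ) + Complex.I)⁻¹
      = (((1 + x ^ 2)⁻¹ : ℝ) : ℂ) * (2 * Complex.I) := by
    have h1 : (x : ℂ) - Complex.I ≠ 0 := ofReal_sub_ne_zero x (by simp)
    have h2 : (x : ℂ) + Complex.I ≠ 0 := by
      simpa using ofReal_sub_ne_zero x (c := -Complex.I) (by simp)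
    have h3 : (1 + (x : ℂ) ^ 2) ≠ 0 := by exact_mod_cast (by positivity : (1 + x ^ 2 : ℝ) ≠ 0)
    push_cast
    field_simp
    linear_combination (2 * Complex.I) * Complex.I_sq
  simp_rw [heq]
  rw [integral_mul_const, integral_complex_ofReal, integral_univ_inv_one_add_sq]
  ring

lemma integral_inv_ofReal_sub_sub_inv_ofReal_sub_I_of_im_neg (hc : c.im < 0) :
    ∫ x : ℝ, ((x : ℂ) - c)⁻¹ - ((x : ℂ) - Complex.I)⁻¹ = -(2 * π * Complex.I) := by
  have hsplit (x : ℝ) : ((x : ℂ) - c)⁻¹ - ((x : ℂ) - Complex.I)⁻¹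
      = (((x : ℂ) - c)⁻¹ - ((x : ℂ) - -Complex.I)⁻¹)
        - (((x : ℂ) - Complex.I)⁻¹ - ((x : ℂ) + Complex.I)⁻¹) := by
    rw [sub_neg_eq_add]; ring
  have hI : Integrable fun x : ℝ => ((x : ℂ) - Complex.I)⁻¹ - ((x : ℂ) + Complex.I)⁻¹ := by
    simpa using integrable_inv_ofReal_sub_sub_inv_ofReal_sub (c := Complex.I) (d := -Complex.I)
      (by simp) (by simp)
  simp_rw [hsplit]
  rw [integral_sub (integrable_inv_ofReal_sub_sub_inv_ofReal_sub hc.ne (by simp)) hI,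
    integral_inv_ofReal_sub_sub_inv_ofReal_sub_eq_zero (by simpa using hc),
    integral_inv_ofReal_sub_I_sub_inv_ofReal_add_I, zero_sub]

end IntegralInverseOfRealSub


lemma exists_norm_sum_div_ofReal_sub_le {n : ℕ} {c : Fin n → ℂ} (hc : ∀ l, (c l).im ≠ 0)
    (γ : Fin n → ℂ) : ∃ C ≥ 0, ∀ x : ℝ, ‖∑ l, γ l / ((x : ℂ) - c l)‖ ≤ C / (1 + |x|) := by
  choose C hCpos hCle using fun l => exists_norm_inv_ofReal_sub_le (hc l)
  refine ⟨∑ l, ‖γ l‖ * C l,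
    Finset.sum_nonneg fun l _ => mul_nonneg (norm_nonneg _) (hCpos l).le, fun x => ?_⟩
  calc ‖∑ l, γ l / ((x : ℂ) - c l)‖ ≤ ∑ l, ‖γ l / ((x : ℂ) - c l)‖ := norm_sum_le _ _
    _ = ∑ l, ‖γ l‖ * ‖((x : ℂ) - c l)⁻¹‖ := by simp only [div_eq_mul_inv, norm_mul]
    _ ≤ ∑ l, ‖γ l‖ * (C l / (1 + |x|)) := by gcongr with l; exact hCle l x
    _ = (∑ l, ‖γ l‖ * C l) / (1 + |x|) := by simp_rw [Finset.sum_div, mul_div_assoc]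

section RatKernel

variable {n₁ n₂ : ℕ} {a : Fin n₁ → ℂ} {b : Fin n₂ → ℂ} {α : Fin n₁ → ℂ} {β : Fin n₂ → ℂ}

lemma ratKernel_mul_pow (ha : ∀ l, (a l).im ≠ 0) (hb : ∀ l, (b l).im ≠ 0) {j : ℕ}
    (hmom : ∀ k < j, ∑ l, α l * a l ^ k = ∑ l, β l * b l ^ k) (x : ℝ) :
    ratKernel a b α β x * (x : ℂ) ^ j
      = ratKernel a b (fun l => α l * a l ^ j) (fun l => β l * b l ^ j) x := by
  have hpoly : ∑ i ∈ Finset.range j, (x : ℂ) ^ i * ∑ l, α l * a l ^ (j - 1 - i)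
      = ∑ i ∈ Finset.range j, (x : ℂ) ^ i * ∑ l, β l * b l ^ (j - 1 - i) :=
    Finset.sum_congr rfl fun i hi => by rw [hmom _ (by grind)]
  rw [ratKernel, ratKernel, mul_assoc, sub_mul,
    sum_div_sub_mul_pow a α (fun l => ofReal_sub_ne_zero x (ha l)),
    sum_div_sub_mul_pow b β (fun l => ofReal_sub_ne_zero x (hb l)), hpoly,
    add_sub_add_right_eq_sub]

lemma ratKernel_eq_of_sum_eq (h : ∑ j, α j = ∑ j, β j) (x : ℝ) :
    ratKernel a b α β x = (2 * π * Complex.I)⁻¹ *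
      (∑ j, α j * (((x : ℂ) - a j)⁻¹ - ((x : ℂ) - Complex.I)⁻¹)
        - ∑ j, β j * (((x : ℂ) - b j)⁻¹ - ((x : ℂ) - Complex.I)⁻¹)) := by
  simp only [ratKernel, mul_sub, Finset.sum_sub_distrib, ← Finset.sum_mul, h, div_eq_mul_inv,
    one_mul]
  ring

lemma integrable_ratKernel (ha : ∀ l, (a l).im ≠ 0) (hb : ∀ l, (b l).im ≠ 0)
    (h : ∑ j, α j = ∑ j, β j) : Integrable (ratKernel a b α β) := by
  have hI : Complex.I.im ≠ 0 := by simp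
  simp_rw [funext (ratKernel_eq_of_sum_eq h)]
  refine ((integrable_finsetSum _ fun j _ => ?_).sub
    (integrable_finsetSum _ fun j _ => ?_)).const_mul _
  exacts [(integrable_inv_ofReal_sub_sub_inv_ofReal_sub (ha j) hI).const_mul _,
    (integrable_inv_ofReal_sub_sub_inv_ofReal_sub (hb j) hI).const_mul _]

lemma integral_ratKernel (haU : ∀ l, 0 < (a l).im) (hbL : ∀ l, (b l).im < 0)
    (h : ∑ j, α j = ∑ j, β j) : ∫ x, ratKernel a b α β x = ∑ j, α j := by
  have hI : Complex.I.im ≠ 0 := by simp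
  have hα (j : Fin n₁) :
      Integrable fun x : ℝ => α j * (((x : ℂ) - a j)⁻¹ - ((x : ℂ) - Complex.I)⁻¹) :=
    (integrable_inv_ofReal_sub_sub_inv_ofReal_sub (haU j).ne' hI).const_mul _
  have hβ (j : Fin n₂) :
      Integrable fun x : ℝ => β j * (((x : ℂ) - b j)⁻¹ - ((x : ℂ) - Complex.I)⁻¹) :=
    (integrable_inv_ofReal_sub_sub_inv_ofReal_sub (hbL j).ne hI).const_mul _
  simp_rw [ratKernel_eq_of_sum_eq h]
  rw [integral_const_mul, integral_sub (integrable_finsetSum _ fun j _ => hα j)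
      (integrable_finsetSum _ fun j _ => hβ j),
    integral_finsetSum _ fun j _ => hα j, integral_finsetSum _ fun j _ => hβ j]
  have hα0 (j : Fin n₁) :
      ∫ x : ℝ, α j * (((x : ℂ) - a j)⁻¹ - ((x : ℂ) - Complex.I)⁻¹) = 0 := by
    rw [integral_const_mul,
      integral_inv_ofReal_sub_sub_inv_ofReal_sub_eq_zero (by simpa using haU j), mul_zero]
  have hβ2πI (j : Fin n₂) :
      ∫ x : ℝ, β j * (((x : ℂ) - b j)⁻¹ - ((x : ℂ) - Complex.I)⁻¹)
        = -(β j * (2 * π * Complex.I)) := by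
    rw [integral_const_mul, integral_inv_ofReal_sub_sub_inv_ofReal_sub_I_of_im_neg (hbL j), mul_neg]
  simp only [hα0, hβ2πI, Finset.sum_const_zero, Finset.sum_neg_distrib, ← Finset.sum_mul, ← h]
  field_simp
  ring

lemma exists_norm_ratKernel_le (ha : ∀ l, (a l).im ≠ 0) (hb : ∀ l, (b l).im ≠ 0) :
    ∃ C ≥ 0, ∀ x : ℝ, ‖ratKernel a b α β x‖ ≤ C / (1 + |x|) := by
  obtain ⟨A, hA, hAle⟩ := exists_norm_sum_div_ofReal_sub_le ha α
  obtain ⟨B, hB, hBle⟩ := exists_norm_sum_div_ofReal_sub_le hb β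
  refine ⟨‖1 / (2 * π * Complex.I)‖ * (A + B), by positivity, fun x => ?_⟩
  rw [ratKernel, norm_mul, mul_div_assoc, add_div]
  gcongr
  exact (norm_sub_le _ _).trans (add_le_add (hAle x) (hBle x))

lemma exists_norm_ratKernel_le_div_pow (ha : ∀ l, (a l).im ≠ 0) (hb : ∀ l, (b l).im ≠ 0)
    {m : ℕ} (hmom : ∀ k < m, ∑ l, α l * a l ^ k = ∑ l, β l * b l ^ k) :
    ∃ C > 0, ∀ x : ℝ, ‖ratKernel a b α β x‖ ≤ C / (1 + |x|) ^ (m + 1) := by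
  obtain ⟨C₀, hC₀, hC₀le⟩ := exists_norm_ratKernel_le (α := α) (β := β) ha hb
  obtain ⟨Cₘ, hCₘ, hCₘle⟩ := exists_norm_ratKernel_le
    (α := fun l => α l * a l ^ m) (β := fun l => β l * b l ^ m) ha hb
  refine ⟨2 ^ (m - 1) * (C₀ + Cₘ) + 1, by positivity, fun x => ?_⟩
  have hx : 0 < 1 + |x| := by positivity
  have hK₀ := (le_div_iff₀ hx).1 (hC₀le x)
  have hKₘ : ‖ratKernel a b α β x‖ * |x| ^ m * (1 + |x|) ≤ Cₘ := by
    have := (le_div_iff₀ hx).1 (hCₘle x)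
    rwa [← ratKernel_mul_pow ha hb hmom, norm_mul, norm_pow, Complex.norm_real,
      Real.norm_eq_abs] at this
  rw [le_div_iff₀ (by positivity)]
  calc ‖ratKernel a b α β x‖ * (1 + |x|) ^ (m + 1)
      = ‖ratKernel a b α β x‖ * (1 + |x|) * (1 + |x|) ^ m := by ring
    _ ≤ ‖ratKernel a b α β x‖ * (1 + |x|) * (2 ^ (m - 1) * (1 ^ m + |x| ^ m)) := by
        gcongr
        exact add_pow_le zero_le_one (abs_nonneg x) m
    _ = 2 ^ (m - 1) * (‖ratKernel a b α β x‖ * (1 + |x|)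
          + ‖ratKernel a b α β x‖ * |x| ^ m * (1 + |x|)) := by ring
    _ ≤ 2 ^ (m - 1) * (C₀ + Cₘ) + 1 := by
        nlinarith [add_le_add hK₀ hKₘ, pow_pos (two_pos (α := ℝ)) (m - 1)]

end RatKernel

theorem stmt_9_general (n₁ n₂ : ℕ) (a : Fin n₁ → ℂ) (b : Fin n₂ → ℂ)
    (haU : ∀ j, 0 < (a j).im) (hbL : ∀ j, (b j).im < 0)
    (α : Fin n₁ → ℂ) (β : Fin n₂ → ℂ) (m : ℕ) (hm : 1 ≤ m)
    (hmom : ∀ k < m, ∑ j, α j * a j ^ k = ∑ j, β j * b j ^ k)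
    (hnorm : ∑ j, α j = 1)
    (hzero : ∀ k : ℕ, 1 ≤ k → k < m → ∑ j, α j * a j ^ k = 0) :
    Integrable (fun x : ℝ => ratKernel a b α β x) ∧
    (∫ x : ℝ, ratKernel a b α β x) = 1 ∧
    (∀ j : ℕ, 0 < j → j < m →
      Integrable (fun x : ℝ => ratKernel a b α β x * (x : ℂ) ^ j) ∧
      (∫ x : ℝ, ratKernel a b α β x * (x : ℂ) ^ j) = 0) ∧
    ∃ CK > (0 : ℝ), ∀ x : ℝ, ‖ratKernel a b α β x‖ ≤ CK / (1 + |x|) ^ (m + 1) := by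
  have ha (j : Fin n₁) : (a j).im ≠ 0 := (haU j).ne'
  have hb (j : Fin n₂) : (b j).im ≠ 0 := (hbL j).ne
  have h₀ : ∑ j, α j = ∑ j, β j := by simpa using hmom 0 hm
  refine ⟨integrable_ratKernel ha hb h₀, (integral_ratKernel haU hbL h₀).trans hnorm,
    fun j hj₀ hjm => ?_, exists_norm_ratKernel_le_div_pow ha hb hmom⟩
  simp_rw [ratKernel_mul_pow ha hb fun k hk => hmom k (hk.trans hjm)]
  exact ⟨integrable_ratKernel ha hb (hmom j hjm),
    (integral_ratKernel haU hbL (hmom j hjm)).trans (hzero j hj₀ hjm)⟩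

/-- If the moment matching conditions `Σ α_j a_j^k = Σ β_j b_j^k` hold for
`k = 0, …, m−1`, with `Σ α_j = 1` and `Σ α_j a_j^k = 0` for `1 ≤ k < m`, then the
rational kernel `K` is an `m`th order kernel: it is integrable with
`∫ K = 1`, `x ↦ K(x)x^j` is integrable with zero integral for `0 < j < m`, and
`|K(x)| ≤ C_K/(1+|x|)^{m+1}` for some constant `C_K > 0`. -/
theorem stmt_9 (n₁ n₂ : ℕ) (a : Fin n₁ → ℂ) (b : Fin n₂ → ℂ)
    (ha : Function.Injective a) (hb : Function.Injective b)
    (haU : ∀ j, 0 < (a j).im) (hbL : ∀ j, (b j).im < 0)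
    (α : Fin n₁ → ℂ) (β : Fin n₂ → ℂ) (m : ℕ) (hm : 1 ≤ m)
    (hmom : ∀ k < m, ∑ j, α j * a j ^ k = ∑ j, β j * b j ^ k)
    (hnorm : ∑ j, α j = 1)
    (hzero : ∀ k : ℕ, 1 ≤ k → k < m → ∑ j, α j * a j ^ k = 0) :
    Integrable (fun x : ℝ => ratKernel a b α β x) ∧
    (∫ x : ℝ, ratKernel a b α β x) = 1 ∧
    (∀ j : ℕ, 0 < j → j < m →
      Integrable (fun x : ℝ => ratKernel a b α β x * (x : ℂ) ^ j) ∧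
      (∫ x : ℝ, ratKernel a b α β x * (x : ℂ) ^ j) = 0) ∧
    ∃ CK > (0 : ℝ), ∀ x : ℝ, ‖ratKernel a b α β x‖ ≤ CK / (1 + |x|) ^ (m + 1) :=
  stmt_9_general n₁ n₂ a b haU hbL α β m hm hmom hnorm hzero
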